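/- arXiv:2511.03323 — 2 statements merged into one kernel-verified Lean document; each statement's English description precedes it below -/
import Mathlib

section
/- Let l be a positive integer with N_l > 0 and let i be an integer with 1 ≤ i ≤ N_l. Then δ_i^{(l)} ≥ nr·(1 + (⌈qi/(q−1)⌉ − 2)·r)/gcd(nr, q^l−1), and consequently δ_i^{(l)} ≥ nr²·(i−1)/gcd(nr, q^l−1) + nr/gcd(nr, q^l−1). -/
open scoped Classical

/-- The `q`-cyclotomic coset of `i` modulo `N`, with representatives taken in `{1, …, N}`. -/
noncomputable def cosetOf (q N i : ℕ) : Finset ℕ :=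
  (Finset.Icc 1 N).filter (fun x => ∃ j : ℕ, x ≡ i * q ^ j [MOD N])

/-- `Z_{n,r} = {1 + i r : 0 ≤ i ≤ n-1}`. -/
def Zset (n r : ℕ) : Finset ℕ := (Finset.range n).image (fun i => 1 + i * r)

/-- The collection of `q`-cyclotomic cosets contained in `Z_{n,r}`. -/
noncomputable def cosetsIn (q n r : ℕ) : Finset (Finset ℕ) :=
  (Zset n r).image (fun i => cosetOf q (n * r) i)

/-- `N_l`: the number of `q`-cyclotomic cosets of size `l` contained in `Z_{n,r}`. -/
noncomputable def Ncount (q n r l : ℕ) : ℕ :=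
  ((cosetsIn q n r).filter (fun C => C.card = l)).card

/-- Coset leader: the smallest element of a coset. -/
noncomputable def leader (C : Finset ℕ) : ℕ := sInf (C : Set ℕ)

/-- The sorted (increasing) list of coset leaders of the cosets of size `l` in `Z_{n,r}`. -/
noncomputable def leaderList (q n r l : ℕ) : List ℕ :=
  Finset.sort (((cosetsIn q n r).filter (fun C => C.card = l)).image leader) (· ≤ ·)

/-- `δ_i^{(l)}`: the `i`-th smallest coset leader (1-indexed). -/
noncomputable def delta (q n r l i : ℕ) : ℕ := (leaderList q n r l).getD (i - 1) 0

/-!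
Put `m = nr / gcd(nr, q^l - 1)` and `δ = δ_i^{(l)}`. A leader `x` of a coset of size `l` satisfies
`x q^l ≡ x (mod nr)`, hence `m ∣ x`, and `x ≡ 1 (mod r)` because `q ≡ 1 (mod r)`. Each of the at
least `i` leaders `x ≤ δ` is pushed up to `y = x q^t ∈ (δ/q, δ]`; distinct leaders give distinct
`y`, as `y` determines the coset of `x`. All these `y` are congruent to `δ` modulo the coprime
product `m r`, so the smallest of them is at most `δ - (i - 1) m r` while still exceeding `δ / q`.
This gives `(i - 1) q m r < (q - 1) δ`, and the two bounds follow from `δ = m w` by arithmetic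
with the ceiling.
-/

open Finset Function

theorem Nat.div_gcd_dvd_of_dvd_mul {N x d : ℕ} (hN : 0 < N) (h : N ∣ x * d) :
    N / N.gcd d ∣ x := by
  rw [Nat.div_dvd_iff_dvd_mul (Nat.gcd_dvd_left N d) (Nat.gcd_pos_of_pos_left d hN),
    mul_comm, ← Nat.gcd_mul_left]
  exact Nat.dvd_gcd (dvd_mul_left N x) h

theorem card_sub_one_mul_le_of_modEq {Y : Finset ℕ} {a b M : ℕ}
    (hY : ∀ y ∈ Y, a ≤ y ∧ y ≤ b ∧ y ≡ b [MOD M]) : (#Y - 1) * M ≤ b - a := by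
  have hdiv : ∀ y ∈ Y, (b - y) / M * M = b - y := fun y hy =>
    Nat.div_mul_cancel ((Nat.modEq_iff_dvd' (hY y hy).2.1).1 (hY y hy).2.2)
  have hmaps : ∀ y ∈ Y, (b - y) / M ∈ range ((b - a) / M + 1) := fun y hy =>
    mem_range_succ_iff.2 (Nat.div_le_div_right (Nat.sub_le_sub_left (hY y hy).1 b))
  have hinj : Set.InjOn (fun y => (b - y) / M) Y := by
    intro y hy y' hy' h
    have hsub : b - y = b - y' := by
      rw [← hdiv y hy, ← hdiv y' hy']; exact congrArg (· * M) h
    have := (hY y hy).2.1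
    have := (hY y' hy').2.1
    omega
  have hcard : #Y ≤ (b - a) / M + 1 :=
    card_range ((b - a) / M + 1) ▸ card_le_card_of_injOn _ hmaps hinj
  calc (#Y - 1) * M ≤ (b - a) / M * M := Nat.mul_le_mul_right M (Nat.sub_le_iff_le_add.2 hcard)
    _ ≤ b - a := Nat.div_mul_le_self _ _

theorem card_sub_one_mul_lt_of_modEq {Y : Finset ℕ} {q M δ : ℕ} (hY : Y.Nonempty)
    (h : ∀ y ∈ Y, y ≤ δ ∧ y ≡ δ [MOD M] ∧ δ < q * y) : (#Y - 1) * (q * M) < (q - 1) * δ := by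
  set y₀ := Y.min' hY
  have hle := card_sub_one_mul_le_of_modEq (a := y₀) fun y hy =>
    ⟨Y.min'_le y hy, (h y hy).1, (h y hy).2.1⟩
  obtain ⟨hy₀δ, -, hδy₀⟩ := h y₀ (Y.min'_mem hY)
  have hq : 1 ≤ q := Nat.pos_of_ne_zero (by rintro rfl; simp at hδy₀)
  zify [hq, hy₀δ, hY.card_pos] at hle ⊢
  nlinarith

theorem mul_pow_log_div_le {q x δ : ℕ} (hxδ : x ≤ δ) : x * q ^ Nat.log q (δ / x) ≤ δ := by
  rcases Nat.eq_zero_or_pos x with rfl | hx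
  · simp
  calc x * q ^ Nat.log q (δ / x) ≤ x * (δ / x) :=
        Nat.mul_le_mul_left x (Nat.pow_log_le_self q (Nat.div_pos hxδ hx).ne')
    _ ≤ δ := Nat.mul_div_le δ x

theorem lt_mul_mul_pow_log_div {q x δ : ℕ} (hq : 1 < q) (hx : 0 < x) :
    δ < q * (x * q ^ Nat.log q (δ / x)) := by
  calc δ < q ^ (Nat.log q (δ / x) + 1) * x :=
        (Nat.div_lt_iff_lt_mul hx).1 (Nat.lt_pow_succ_log_self hq (δ / x))
    _ = q * (x * q ^ Nat.log q (δ / x)) := by ring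

theorem ceil_div_sub_two_mul_le {q i : ℕ} (hq : 2 ≤ q) :
    (⌈(q * i : ℚ) / ((q : ℚ) - 1)⌉ - 2) * ((q : ℤ) - 1) ≤ q * ((i : ℤ) - 1) := by
  have hq1 : (0 : ℚ) < (q : ℚ) - 1 := by
    have : (2 : ℚ) ≤ q := by exact_mod_cast hq
    linarith
  have h := Int.ceil_lt_add_one ((q * i : ℚ) / ((q : ℚ) - 1))
  rw [← sub_lt_iff_lt_add, lt_div_iff₀ hq1] at h
  have : (⌈(q * i : ℚ) / ((q : ℚ) - 1)⌉ - 1) * ((q : ℤ) - 1) < q * i := by exact_mod_cast h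
  linarith

theorem add_one_le_ceil_mul_div {q i : ℕ} (hq : 2 ≤ q) (hi : 1 ≤ i) :
    (i : ℤ) + 1 ≤ ⌈(q * i : ℚ) / ((q : ℚ) - 1)⌉ := by
  have hq1 : (0 : ℚ) < (q : ℚ) - 1 := by
    have : (2 : ℚ) ≤ q := by exact_mod_cast hq
    linarith
  have : (i : ℚ) < (q * i : ℚ) / ((q : ℚ) - 1) := by
    rw [lt_div_iff₀ hq1]
    have : (1 : ℚ) ≤ i := by exact_mod_cast hi
    linarith
  exact Int.add_one_le_of_lt (Int.lt_ceil.2 (by exact_mod_cast this))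

theorem one_add_ceil_sub_two_mul_le {q r i w : ℕ} (hq : 2 ≤ q) (hi : 1 ≤ i)
    (h : (i - 1) * (q * r) < (q - 1) * w) :
    1 + ((⌈(q * i : ℚ) / ((q : ℚ) - 1)⌉ : ℚ) - 2) * r ≤ w := by
  have hc := ceil_div_sub_two_mul_le (i := i) hq
  zify [hi, (by omega : 1 ≤ q)] at h
  have hq1 : (0 : ℤ) < q - 1 := by omega
  have : (⌈(q * i : ℚ) / ((q : ℚ) - 1)⌉ - 2) * r < (w : ℤ) := by
    refine lt_of_mul_lt_mul_right ?_ hq1.le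
    nlinarith [mul_le_mul_of_nonneg_right hc (Int.natCast_nonneg r)]
  have : 1 + (⌈(q * i : ℚ) / ((q : ℚ) - 1)⌉ - 2) * r ≤ (w : ℤ) := by linarith
  exact_mod_cast this

theorem Finset.getD_sort_eq_orderEmbOfFin {α : Type*} [LinearOrder α] (s : Finset α) {i : ℕ}
    (hi : i < #s) (d : α) : (s.sort (· ≤ ·)).getD i d = s.orderEmbOfFin rfl ⟨i, hi⟩ := by
  rw [orderEmbOfFin_apply, List.getD_eq_getElem _ _ (by simpa using hi)]
  rfl

theorem Finset.le_card_filter_le_orderEmbOfFin {α : Type*} [LinearOrder α] (s : Finset α)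
    (j : Fin #s) : j + 1 ≤ #(s.filter (· ≤ s.orderEmbOfFin rfl j)) := by
  calc (j : ℕ) + 1 = #((Iic j).map (s.orderEmbOfFin rfl).toEmbedding) := by simp
    _ ≤ _ := card_le_card fun x hx => by
      obtain ⟨k, hk, rfl⟩ := mem_map.1 hx
      exact mem_filter.2 ⟨orderEmbOfFin_mem s rfl k, (s.orderEmbOfFin rfl).monotone (mem_Iic.1 hk)⟩

section CyclotomicCoset

variable {q N : ℕ}

theorem mem_cosetOf {x y : ℕ} :
    y ∈ cosetOf q N x ↔ y ∈ Icc 1 N ∧ ∃ j, y ≡ x * q ^ j [MOD N] := by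
  simp [cosetOf]

theorem cosetOf_subset_Icc {x : ℕ} : cosetOf q N x ⊆ Icc 1 N :=
  filter_subset _ _

theorem natCast_injOn_Icc : Set.InjOn (Nat.cast : ℕ → ZMod N) (Icc 1 N) := by
  intro y hy z hz h
  simp only [coe_Icc, Set.mem_Icc] at hy hz
  have h' : ((y - 1 : ℕ) : ZMod N) = ((z - 1 : ℕ) : ZMod N) := by
    rw [Nat.cast_sub hy.1, Nat.cast_sub hz.1, h]
  rw [ZMod.natCast_eq_natCast_iff', Nat.mod_eq_of_lt (by omega), Nat.mod_eq_of_lt (by omega)] at h'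
  omega

theorem exists_mem_Icc_natCast_eq [NeZero N] (a : ZMod N) : ∃ y ∈ Icc 1 N, (y : ZMod N) = a :=
  ⟨(a - 1).val + 1, mem_Icc.2 ⟨by omega, (a - 1).val_lt⟩, by simp⟩

theorem mem_periodicPts_mul_natCast (hqN : q.Coprime N) [NeZero N] (a : ZMod N) :
    a ∈ periodicPts (· * (q : ZMod N)) := by
  refine ⟨N.totient, Nat.totient_pos.2 (NeZero.pos N), ?_⟩
  have : ((q ^ N.totient : ℕ) : ZMod N) = ((1 : ℕ) : ZMod N) :=
    (ZMod.natCast_eq_natCast_iff _ _ _).2 (Nat.ModEq.pow_totient hqN)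
  simp only [IsPeriodicPt, IsFixedPt, mul_right_iterate_apply]
  push_cast at this
  rw [this, mul_one]

theorem mem_cosetOf_iff_mem_periodicOrbit (hqN : q.Coprime N) [NeZero N] {x y : ℕ} :
    y ∈ cosetOf q N x ↔
      y ∈ Icc 1 N ∧ (y : ZMod N) ∈ periodicOrbit (· * (q : ZMod N)) (x : ZMod N) := by
  simp only [mem_cosetOf, mem_periodicOrbit_iff (mem_periodicPts_mul_natCast hqN _),
    mul_right_iterate_apply, ← ZMod.natCast_eq_natCast_iff, Nat.cast_mul, Nat.cast_pow, eq_comm]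

theorem cosetOf_eq_of_mem (hqN : q.Coprime N) [NeZero N] {x y : ℕ} (hy : y ∈ cosetOf q N x) :
    cosetOf q N y = cosetOf q N x := by
  obtain ⟨-, hyx⟩ := (mem_cosetOf_iff_mem_periodicOrbit hqN).1 hy
  obtain ⟨j, hj⟩ := (mem_periodicOrbit_iff (mem_periodicPts_mul_natCast hqN _)).1 hyx
  ext z
  rw [mem_cosetOf_iff_mem_periodicOrbit hqN, mem_cosetOf_iff_mem_periodicOrbit hqN, ← hj,
    periodicOrbit_apply_iterate_eq (mem_periodicPts_mul_natCast hqN _)]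

theorem card_cosetOf (hqN : q.Coprime N) [NeZero N] (x : ℕ) :
    #(cosetOf q N x) = minimalPeriod (· * (q : ZMod N)) (x : ZMod N) := by
  set f : ZMod N → ZMod N := (· * (q : ZMod N))
  have himage : (cosetOf q N x).image (Nat.cast : ℕ → ZMod N) =
      (range (minimalPeriod f x)).image (f^[·] x) := by
    ext a
    obtain ⟨y, hy, rfl⟩ := exists_mem_Icc_natCast_eq a
    have hcoset : (∃ z ∈ cosetOf q N x, (z : ZMod N) = y) ↔ y ∈ cosetOf q N x :=
      ⟨fun ⟨z, hz, hzy⟩ => natCast_injOn_Icc (cosetOf_subset_Icc hz) hy hzy ▸ hz,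
        fun h => ⟨y, h, rfl⟩⟩
    rw [mem_image, hcoset, mem_cosetOf_iff_mem_periodicOrbit hqN]
    simp [hy, periodicOrbit, f]
  rw [← card_image_of_injOn (natCast_injOn_Icc.mono cosetOf_subset_Icc), himage,
    card_image_of_injOn (by simpa using iterate_injOn_Iio_minimalPeriod), card_range]

theorem mul_pow_card_cosetOf_modEq (hqN : q.Coprime N) [NeZero N] (x : ℕ) :
    x * q ^ #(cosetOf q N x) ≡ x [MOD N] := by
  rw [← ZMod.natCast_eq_natCast_iff, card_cosetOf hqN]
  push_cast
  rw [← mul_right_iterate_apply]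
  exact iterate_minimalPeriod

theorem cosetOf_nonempty [NeZero N] (x : ℕ) : (cosetOf q N x).Nonempty := by
  obtain ⟨y, hy, hyx⟩ := exists_mem_Icc_natCast_eq (x : ZMod N)
  exact ⟨y, mem_cosetOf.2 ⟨hy, 0, by simpa [← ZMod.natCast_eq_natCast_iff] using hyx⟩⟩

theorem leader_mem_cosetOf [NeZero N] (x : ℕ) : leader (cosetOf q N x) ∈ cosetOf q N x :=
  Nat.sInf_mem (cosetOf_nonempty x)

theorem cosetOf_leader (hqN : q.Coprime N) [NeZero N] (x : ℕ) :
    cosetOf q N (leader (cosetOf q N x)) = cosetOf q N x :=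
  cosetOf_eq_of_mem hqN (leader_mem_cosetOf x)

theorem modEq_of_mem_cosetOf {r x y : ℕ} (hrN : r ∣ N) (hq : q ≡ 1 [MOD r])
    (hy : y ∈ cosetOf q N x) : y ≡ x [MOD r] := by
  obtain ⟨-, j, hj⟩ := mem_cosetOf.1 hy
  simpa using (hj.of_dvd hrN).trans ((hq.pow j).mul_left x)

end CyclotomicCoset

noncomputable def leaders (q n r l : ℕ) : Finset ℕ :=
  ((cosetsIn q n r).filter (fun C => C.card = l)).image leader

section Leaders

variable {q n r l x : ℕ}

theorem exists_of_mem_cosetsIn {C : Finset ℕ} (hC : C ∈ cosetsIn q n r) :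
    ∃ z, z ≡ 1 [MOD r] ∧ cosetOf q (n * r) z = C := by
  obtain ⟨z, hz, rfl⟩ := mem_image.1 hC
  obtain ⟨t, -, rfl⟩ := mem_image.1 hz
  exact ⟨1 + t * r, by simp [Nat.ModEq], rfl⟩

theorem exists_of_mem_leaders (hx : x ∈ leaders q n r l) :
    ∃ z, z ≡ 1 [MOD r] ∧ #(cosetOf q (n * r) z) = l ∧ leader (cosetOf q (n * r) z) = x := by
  obtain ⟨C, hC, rfl⟩ := mem_image.1 hx
  obtain ⟨hC, hl⟩ := mem_filter.1 hC
  obtain ⟨z, hz, rfl⟩ := exists_of_mem_cosetsIn hC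
  exact ⟨z, hz, hl, rfl⟩

theorem mem_Icc_of_mem_leaders [NeZero (n * r)] (hx : x ∈ leaders q n r l) :
    x ∈ Icc 1 (n * r) := by
  obtain ⟨z, -, -, rfl⟩ := exists_of_mem_leaders hx
  exact cosetOf_subset_Icc (leader_mem_cosetOf z)

theorem modEq_one_of_mem_leaders [NeZero (n * r)] (hq : q ≡ 1 [MOD r])
    (hx : x ∈ leaders q n r l) : x ≡ 1 [MOD r] := by
  obtain ⟨z, hz, -, rfl⟩ := exists_of_mem_leaders hx
  exact (modEq_of_mem_cosetOf (dvd_mul_left r n) hq (leader_mem_cosetOf z)).trans hz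

theorem div_gcd_dvd_of_mem_leaders (hqN : q.Coprime (n * r)) [NeZero (n * r)]
    (hx : x ∈ leaders q n r l) : n * r / (n * r).gcd (q ^ l - 1) ∣ x := by
  obtain ⟨z, -, hl, rfl⟩ := exists_of_mem_leaders hx
  have hmod := mul_pow_card_cosetOf_modEq hqN (leader (cosetOf q (n * r) z))
  rw [cosetOf_leader hqN, hl] at hmod
  refine Nat.div_gcd_dvd_of_dvd_mul (NeZero.pos _) ?_
  rcases Nat.eq_zero_or_pos (q ^ l) with hql | hql
  · simp [hql]
  rw [Nat.mul_sub_one]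
  exact (Nat.modEq_iff_dvd' (Nat.le_mul_of_pos_right _ hql)).1 hmod.symm

theorem eq_of_mem_cosetOf_of_mem_leaders (hqN : q.Coprime (n * r)) [NeZero (n * r)] {x' : ℕ}
    (hx : x ∈ leaders q n r l) (hx' : x' ∈ leaders q n r l) (h : x ∈ cosetOf q (n * r) x') :
    x = x' := by
  obtain ⟨z, -, -, rfl⟩ := exists_of_mem_leaders hx
  obtain ⟨z', -, -, rfl⟩ := exists_of_mem_leaders hx'
  rw [cosetOf_leader hqN] at h
  rw [← cosetOf_eq_of_mem hqN h, cosetOf_leader hqN]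

theorem injOn_mul_pow_leaders (hqN : q.Coprime (n * r)) [NeZero (n * r)] (e : ℕ → ℕ) :
    Set.InjOn (fun x => x * q ^ e x) (leaders q n r l) := by
  intro x hx x' hx' h
  wlog hle : e x ≤ e x' generalizing x x'
  · exact (this hx' hx h.symm (by omega)).symm
  refine eq_of_mem_cosetOf_of_mem_leaders hqN hx hx' <|
    mem_cosetOf.2 ⟨mem_Icc_of_mem_leaders hx, e x' - e x, ?_⟩
  rw [← ZMod.natCast_eq_natCast_iff]
  refine (((ZMod.isUnit_iff_coprime q (n * r)).2 hqN).pow (e x)).mul_right_cancel ?_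
  have h' := congrArg (Nat.cast : ℕ → ZMod (n * r)) h
  push_cast at h' ⊢
  rw [h', mul_assoc, ← pow_add, Nat.sub_add_cancel hle]

theorem card_leaders (hqN : q.Coprime (n * r)) [NeZero (n * r)] :
    #(leaders q n r l) = Ncount q n r l := by
  refine card_image_of_injOn fun C hC C' hC' h => ?_
  obtain ⟨z, -, rfl⟩ := exists_of_mem_cosetsIn (mem_filter.1 hC).1
  obtain ⟨z', -, rfl⟩ := exists_of_mem_cosetsIn (mem_filter.1 hC').1
  rw [← cosetOf_leader hqN z, ← cosetOf_leader hqN z']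
  exact congrArg (cosetOf q (n * r)) h

variable {i : ℕ}

theorem delta_eq_orderEmbOfFin (hqN : q.Coprime (n * r)) [NeZero (n * r)] (hi1 : 1 ≤ i)
    (hi2 : i ≤ Ncount q n r l) :
    delta q n r l i =
      (leaders q n r l).orderEmbOfFin rfl ⟨i - 1, by rw [card_leaders hqN]; omega⟩ :=
  getD_sort_eq_orderEmbOfFin _ _ _

theorem delta_mem_leaders (hqN : q.Coprime (n * r)) [NeZero (n * r)] (hi1 : 1 ≤ i)
    (hi2 : i ≤ Ncount q n r l) : delta q n r l i ∈ leaders q n r l := by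
  rw [delta_eq_orderEmbOfFin hqN hi1 hi2]
  exact orderEmbOfFin_mem _ _ _

theorem le_card_filter_le_delta (hqN : q.Coprime (n * r)) [NeZero (n * r)] (hi1 : 1 ≤ i)
    (hi2 : i ≤ Ncount q n r l) :
    i ≤ #((leaders q n r l).filter (· ≤ delta q n r l i)) := by
  rw [delta_eq_orderEmbOfFin hqN hi1 hi2]
  convert le_card_filter_le_orderEmbOfFin _ _
  simp only
  omega

theorem mul_pow_modEq_of_mem_leaders (hqN : q.Coprime (n * r)) [NeZero (n * r)]
    (hq : q ≡ 1 [MOD r]) {y : ℕ} (hx : x ∈ leaders q n r l) (hy : y ∈ leaders q n r l) (t : ℕ) :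
    x * q ^ t ≡ y [MOD n * r / (n * r).gcd (q ^ l - 1) * r] := by
  have hym := div_gcd_dvd_of_mem_leaders hqN hy
  have hyr := modEq_one_of_mem_leaders hq hy
  have hmr := Nat.Coprime.coprime_dvd_left hym (by simpa using hyr.gcd_eq)
  refine (Nat.modEq_and_modEq_iff_modEq_mul hmr).1 ⟨?_, ?_⟩
  · exact (Nat.modEq_zero_iff_dvd.2 ((div_gcd_dvd_of_mem_leaders hqN hx).mul_right _)).trans
      (Nat.modEq_zero_iff_dvd.2 hym).symm
  · have hxr := (modEq_one_of_mem_leaders hq hx).mul (hq.pow t)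
    rw [one_pow, mul_one] at hxr
    exact hxr.trans hyr.symm

end Leaders

theorem exists_delta_eq_mul_and_lt {q n r l i : ℕ} (hq : 1 < q) (hqN : q.Coprime (n * r))
    [NeZero (n * r)] (hq1 : q ≡ 1 [MOD r]) (hi1 : 1 ≤ i) (hi2 : i ≤ Ncount q n r l) :
    ∃ w, delta q n r l i = n * r / (n * r).gcd (q ^ l - 1) * w ∧
      (i - 1) * (q * r) < (q - 1) * w := by
  set m := n * r / (n * r).gcd (q ^ l - 1)
  set δ := delta q n r l i
  set F := (leaders q n r l).filter (· ≤ δ)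
  set Φ := fun x => x * q ^ Nat.log q (δ / x)
  have hδ := delta_mem_leaders hqN hi1 hi2
  have hΦ : ∀ y ∈ F.image Φ, y ≤ δ ∧ y ≡ δ [MOD m * r] ∧ δ < q * y := by
    intro y hy
    obtain ⟨x, hxF, rfl⟩ := mem_image.1 hy
    obtain ⟨hx, hxδ⟩ := mem_filter.1 hxF
    exact ⟨mul_pow_log_div_le hxδ, mul_pow_modEq_of_mem_leaders hqN hq1 hx hδ _,
      lt_mul_mul_pow_log_div hq (mem_Icc.1 (mem_Icc_of_mem_leaders hx)).1⟩
  have hcard : #(F.image Φ) = #F :=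
    card_image_of_injOn ((injOn_mul_pow_leaders hqN _).mono (coe_subset.2 (filter_subset _ _)))
  have hlt : (i - 1) * (q * (m * r)) < (q - 1) * δ := calc
    (i - 1) * (q * (m * r)) ≤ (#(F.image Φ) - 1) * (q * (m * r)) := by
        rw [hcard]
        gcongr
        exact le_card_filter_le_delta hqN hi1 hi2
    _ < (q - 1) * δ :=
        card_sub_one_mul_lt_of_modEq ⟨Φ δ, mem_image_of_mem Φ (mem_filter.2 ⟨hδ, le_rfl⟩)⟩ hΦ
  obtain ⟨w, hw⟩ : m ∣ δ := div_gcd_dvd_of_mem_leaders hqN hδ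
  refine ⟨w, hw, Nat.lt_of_mul_lt_mul_left (a := m) ?_⟩
  rw [hw] at hlt
  linarith

theorem stmt2_general (q n r : ℕ) (hq : IsPrimePow q) (hn : 0 < n)
    (hco : Nat.Coprime n q) (hr : 0 < r) (hrdvd : r ∣ q - 1)
    (l : ℕ) (i : ℕ) (hi1 : 1 ≤ i) (hi2 : i ≤ Ncount q n r l) :
    ((n * r : ℚ) * (1 + ((⌈(q * i : ℚ) / ((q : ℚ) - 1)⌉ : ℚ) - 2) * r)) /
        (Nat.gcd (n * r) (q ^ l - 1) : ℚ) ≤ (delta q n r l i : ℚ) ∧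
    ((n * r : ℚ) * (r : ℚ) * ((i : ℚ) - 1)) / (Nat.gcd (n * r) (q ^ l - 1) : ℚ) +
        (n * r : ℚ) / (Nat.gcd (n * r) (q ^ l - 1) : ℚ) ≤ (delta q n r l i : ℚ) := by
  have hq2 := hq.two_le
  have : NeZero (n * r) := ⟨(Nat.mul_pos hn hr).ne'⟩
  have hq1 : q ≡ 1 [MOD r] := ((Nat.modEq_iff_dvd' (by omega)).2 hrdvd).symm
  have hqr : q.Coprime r :=
    .coprime_dvd_right hrdvd ((Nat.coprime_self_sub_right (by omega)).2 q.coprime_one_right)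
  have hqN : q.Coprime (n * r) := hco.symm.mul_right hqr
  set m := n * r / (n * r).gcd (q ^ l - 1)
  obtain ⟨w, hw, hiw⟩ := exists_delta_eq_mul_and_lt hq2 hqN hq1 hi1 hi2
  have hw' := one_add_ceil_sub_two_mul_le hq2 hi1 hiw
  have hc : (i : ℚ) + 1 ≤ ⌈(q * i : ℚ) / ((q : ℚ) - 1)⌉ := by
    exact_mod_cast add_one_le_ceil_mul_div hq2 hi1
  have hN : (n * r : ℚ) = m * (n * r).gcd (q ^ l - 1) := by
    exact_mod_cast (Nat.div_mul_cancel (Nat.gcd_dvd_left (n * r) (q ^ l - 1))).symm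
  rw [hN, hw]
  field_simp
  push_cast
  refine ⟨mul_le_mul_of_nonneg_left hw' m.cast_nonneg, mul_le_mul_of_nonneg_left ?_ m.cast_nonneg⟩
  nlinarith

theorem stmt2 (q n r : ℕ) (hq : IsPrimePow q) (hn : 0 < n)
    (hco : Nat.Coprime n q) (hr : 0 < r) (hrdvd : r ∣ q - 1)
    (l : ℕ) (hl : 0 < l) (hNl : 0 < Ncount q n r l)
    (i : ℕ) (hi1 : 1 ≤ i) (hi2 : i ≤ Ncount q n r l) :
    ((n * r : ℚ) * (1 + ((⌈(q * i : ℚ) / ((q : ℚ) - 1)⌉ : ℚ) - 2) * r)) /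
        (Nat.gcd (n * r) (q ^ l - 1) : ℚ) ≤ (delta q n r l i : ℚ) ∧
    ((n * r : ℚ) * (r : ℚ) * ((i : ℚ) - 1)) / (Nat.gcd (n * r) (q ^ l - 1) : ℚ) +
        (n * r : ℚ) / (Nat.gcd (n * r) (q ^ l - 1) : ℚ) ≤ (delta q n r l i : ℚ) :=
  stmt2_general q n r hq hn hco hr hrdvd l i hi1 hi2
end

section
/- Suppose nr = (q^m−1)/s for positive integers m and s, and suppose {l_i : i ∈ Z_{n,r}} = {l, m} for a positive integer l with l < m and l ∣ m. If N_l = 1 and 2m(q−1) ≥ q·l·r, then 2(q−1)·δ^{(l)}_1 > q·N_m·r. -/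
open scoped Classical

/-!
The cosets contained in `Z_{n,r}` partition it, so `n = l N_l + m N_m = l + m N_m`. Let `C` be
the unique coset of size `l` and `δ` its leader, so that `δ q^l ≡ δ (mod nr)`. For every `k`
the residue of `δ (1 + k r)` lies in `Z_{n,r}` and is fixed by multiplication by `q^l`, so its
coset has size dividing `l`; since sizes are `l` or `m > l`, that coset is `C`. These residues
take `n / gcd(n, δ)` distinct values, whence `n ≤ δ l`. Together with `m N_m < n` and
`q l r ≤ 2 m (q - 1)`, multiplying out gives the claim.
-/

open Finset Function

namespace CyclotomicCoset

-- For `a = 0` this is `1`, not `N`: the lemmas below assume `1 ≤ a`.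
def repIcc (N a : ℕ) : ℕ := (a - 1) % N + 1

lemma one_le_repIcc (N a : ℕ) : 1 ≤ repIcc N a := Nat.le_add_left 1 _

lemma repIcc_mem_Icc {N : ℕ} (hN : 0 < N) (a : ℕ) : repIcc N a ∈ Icc 1 N := by
  have := Nat.mod_lt (a - 1) hN
  simp only [repIcc, mem_Icc]
  omega

lemma repIcc_modEq {N a : ℕ} (ha : 1 ≤ a) : repIcc N a ≡ a [MOD N] := by
  simpa [repIcc, Nat.sub_add_cancel ha] using (Nat.mod_modEq (a - 1) N).add_right 1

lemma repIcc_eq_repIcc_iff {N a b : ℕ} (ha : 1 ≤ a) (hb : 1 ≤ b) :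
    repIcc N a = repIcc N b ↔ a ≡ b [MOD N] := by
  refine ⟨fun h => (repIcc_modEq ha).symm.trans (h ▸ repIcc_modEq hb), fun h => ?_⟩
  have h' : a - 1 ≡ b - 1 [MOD N] :=
    Nat.ModEq.add_right_cancel' 1 (by rwa [Nat.sub_add_cancel ha, Nat.sub_add_cancel hb])
  rw [repIcc, repIcc, h']

lemma repIcc_of_mem_Icc {N x : ℕ} (hx : x ∈ Icc 1 N) : repIcc N x = x := by
  rw [mem_Icc] at hx
  rw [repIcc, Nat.mod_eq_of_lt (by omega)]
  omega

lemma repIcc_eq_iff {N a x : ℕ} (ha : 1 ≤ a) (hx : x ∈ Icc 1 N) :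
    repIcc N a = x ↔ a ≡ x [MOD N] :=
  ⟨fun h => h ▸ (repIcc_modEq ha).symm, fun h =>
    ((repIcc_eq_repIcc_iff ha (mem_Icc.mp hx).1).mpr h).trans (repIcc_of_mem_Icc hx)⟩

-- Its orbits are the `q`-cyclotomic cosets `cosetOf q N x`.
def cosetStep (q N x : ℕ) : ℕ := repIcc N (x * q)

variable {q N x : ℕ}

lemma one_le_mul_pow (hq : 0 < q) (hx : x ∈ Icc 1 N) (j : ℕ) : 1 ≤ x * q ^ j :=
  Nat.mul_le_mul (mem_Icc.mp hx).1 (Nat.one_le_pow _ _ hq)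

lemma iterate_cosetStep (hq : 0 < q) (hx : x ∈ Icc 1 N) (j : ℕ) :
    (cosetStep q N)^[j] x = repIcc N (x * q ^ j) := by
  induction j with
  | zero => simpa using (repIcc_of_mem_Icc hx).symm
  | succ j ih =>
    rw [iterate_succ_apply', ih, cosetStep, pow_succ, ← mul_assoc]
    exact (repIcc_eq_repIcc_iff (Nat.mul_le_mul (one_le_repIcc _ _) hq)
      (Nat.mul_le_mul (one_le_mul_pow hq hx j) hq)).mpr
      ((repIcc_modEq (one_le_mul_pow hq hx j)).mul_right q)

lemma isPeriodicPt_cosetStep_iff (hq : 0 < q) (hx : x ∈ Icc 1 N) {t : ℕ} :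
    IsPeriodicPt (cosetStep q N) t x ↔ x * q ^ t ≡ x [MOD N] := by
  rw [IsPeriodicPt, IsFixedPt, iterate_cosetStep hq hx, repIcc_eq_iff (one_le_mul_pow hq hx t) hx]

lemma mem_periodicPts_cosetStep {m : ℕ} (hq : 0 < q) (hm : 0 < m) (hqm : q ^ m ≡ 1 [MOD N])
    (hx : x ∈ Icc 1 N) : x ∈ periodicPts (cosetStep q N) :=
  mk_mem_periodicPts hm <| (isPeriodicPt_cosetStep_iff hq hx).mpr <| by
    simpa using hqm.mul_left x

lemma mem_cosetOf_iff (hq : 0 < q) (hx : x ∈ Icc 1 N) {y : ℕ} :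
    y ∈ cosetOf q N x ↔ ∃ j, (cosetStep q N)^[j] x = y := by
  have hN : 0 < N := by have := mem_Icc.mp hx; omega
  simp only [cosetOf, mem_filter, iterate_cosetStep hq hx]
  constructor
  · rintro ⟨hy, j, hj⟩
    exact ⟨j, (repIcc_eq_iff (one_le_mul_pow hq hx j) hy).mpr hj.symm⟩
  · rintro ⟨j, rfl⟩
    exact ⟨repIcc_mem_Icc hN _, j, repIcc_modEq (one_le_mul_pow hq hx j)⟩

lemma self_mem_cosetOf (hx : x ∈ Icc 1 N) : x ∈ cosetOf q N x :=
  mem_filter.mpr ⟨hx, 0, by simp [Nat.ModEq.refl]⟩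

lemma cosetOf_eq_image_range (hq : 0 < q) (hx : x ∈ Icc 1 N)
    (hper : x ∈ periodicPts (cosetStep q N)) :
    cosetOf q N x = (range (minimalPeriod (cosetStep q N) x)).image ((cosetStep q N)^[·] x) := by
  ext y
  rw [mem_cosetOf_iff hq hx, mem_image]
  refine ⟨fun ⟨j, hj⟩ => ⟨j % _, ?_, by rw [iterate_mod_minimalPeriod_eq, hj]⟩,
    fun ⟨j, _, hj⟩ => ⟨j, hj⟩⟩
  exact mem_range.mpr (Nat.mod_lt _ (minimalPeriod_pos_of_mem_periodicPts hper))

lemma card_cosetOf (hq : 0 < q) (hx : x ∈ Icc 1 N) (hper : x ∈ periodicPts (cosetStep q N)) :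
    #(cosetOf q N x) = minimalPeriod (cosetStep q N) x := by
  rw [cosetOf_eq_image_range hq hx hper, card_image_of_injOn, card_range]
  simpa using iterate_injOn_Iio_minimalPeriod (f := cosetStep q N) (x := x)

lemma card_cosetOf_dvd (hq : 0 < q) (hx : x ∈ Icc 1 N) {t : ℕ} (ht : 0 < t)
    (hxt : x * q ^ t ≡ x [MOD N]) : #(cosetOf q N x) ∣ t := by
  have hper := (isPeriodicPt_cosetStep_iff hq hx).mpr hxt
  rw [card_cosetOf hq hx (mk_mem_periodicPts ht hper)]
  exact hper.minimalPeriod_dvd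

lemma mul_pow_card_cosetOf_modEq (hq : 0 < q) (hx : x ∈ Icc 1 N)
    (hper : x ∈ periodicPts (cosetStep q N)) {y : ℕ} (hy : y ∈ cosetOf q N x) :
    y * q ^ #(cosetOf q N x) ≡ y [MOD N] := by
  obtain ⟨j, rfl⟩ := (mem_cosetOf_iff hq hx).mp hy
  have hN : 0 < N := by have := mem_Icc.mp hx; omega
  rw [← isPeriodicPt_cosetStep_iff hq ((iterate_cosetStep hq hx j).symm ▸ repIcc_mem_Icc hN _),
    card_cosetOf hq hx hper]
  exact (isPeriodicPt_minimalPeriod _ _).apply_iterate j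

lemma cosetOf_eq_of_mem {m : ℕ} (hq : 0 < q) (hm : 0 < m) (hqm : q ^ m ≡ 1 [MOD N])
    {y z : ℕ} (hx : x ∈ Icc 1 N) (hy : y ∈ Icc 1 N) (hzx : z ∈ cosetOf q N x)
    (hzy : z ∈ cosetOf q N y) : cosetOf q N x = cosetOf q N y := by
  have hz : z ∈ Icc 1 N := mem_filter.mp hzx |>.1
  have hper {w : ℕ} (hw : w ∈ Icc 1 N) := mem_periodicPts_cosetStep hq hm hqm hw
  have horbit {w : ℕ} (hw : w ∈ Icc 1 N) (hzw : z ∈ cosetOf q N w) :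
      periodicOrbit (cosetStep q N) w = periodicOrbit (cosetStep q N) z := by
    obtain ⟨j, rfl⟩ := (mem_cosetOf_iff hq hw).mp hzw
    exact (periodicOrbit_apply_iterate_eq (hper hw) j).symm
  ext w
  rw [mem_cosetOf_iff hq hx, mem_cosetOf_iff hq hy, ← mem_periodicOrbit_iff (hper hx),
    ← mem_periodicOrbit_iff (hper hy), horbit hx hzx, horbit hy hzy]

end CyclotomicCoset

open CyclotomicCoset

section Zset

variable {q n r x : ℕ}

lemma mem_Zset_iff (hr : 0 < r) : x ∈ Zset n r ↔ x ∈ Icc 1 (n * r) ∧ x ≡ 1 [MOD r] := by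
  simp only [Zset, mem_image, mem_range, mem_Icc]
  constructor
  · rintro ⟨i, hi, rfl⟩
    refine ⟨⟨by omega, by nlinarith⟩, ?_⟩
    simp [Nat.ModEq, Nat.add_mul_mod_self_right]
  · rintro ⟨⟨hx1, hxn⟩, hx⟩
    obtain ⟨i, hi⟩ := (Nat.modEq_iff_dvd' hx1).mp hx.symm
    refine ⟨i, ?_, by rw [mul_comm]; omega⟩
    by_contra! h
    have := Nat.mul_le_mul_left r h
    rw [mul_comm n r] at hxn
    omega

lemma card_Zset (hr : 0 < r) : #(Zset n r) = n := by
  rw [Zset, card_image_of_injective _ fun a b hab => ?_, card_range]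
  simpa [hr.ne'] using hab

lemma cosetOf_subset_Zset (hr : 0 < r) (hqr : q ≡ 1 [MOD r]) (hx : x ∈ Zset n r) :
    cosetOf q (n * r) x ⊆ Zset n r := by
  intro y hy
  obtain ⟨hyIcc, j, hj⟩ := mem_filter.mp hy
  rw [mem_Zset_iff hr] at hx ⊢
  refine ⟨hyIcc, (hj.of_mul_left n).trans ?_⟩
  simpa using hx.2.mul (hqr.pow j)

lemma sum_card_cosetsIn {m : ℕ} (hq : 0 < q) (hm : 0 < m) (hqm : q ^ m ≡ 1 [MOD n * r])
    (hr : 0 < r) (hqr : q ≡ 1 [MOD r]) : ∑ C ∈ cosetsIn q n r, #C = n := by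
  have hIcc {i : ℕ} (hi : i ∈ Zset n r) : i ∈ Icc 1 (n * r) := ((mem_Zset_iff hr).mp hi).1
  have hdisj : (cosetsIn q n r : Set (Finset ℕ)).PairwiseDisjoint id := by
    simp only [cosetsIn, coe_image]
    rintro _ ⟨a, ha, rfl⟩ _ ⟨b, hb, rfl⟩ hne
    refine disjoint_left.mpr fun z hza hzb => hne ?_
    exact cosetOf_eq_of_mem hq hm hqm (hIcc ha) (hIcc hb) hza hzb
  have hunion : (cosetsIn q n r).biUnion id = Zset n r := by
    apply Subset.antisymm
    · simp only [biUnion_subset, cosetsIn, forall_mem_image]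
      exact fun i hi => cosetOf_subset_Zset hr hqr hi
    · exact fun i hi => mem_biUnion.mpr ⟨_, mem_image_of_mem _ hi, self_mem_cosetOf (hIcc hi)⟩
  have := card_biUnion hdisj
  rwa [hunion, card_Zset hr, eq_comm] at this

lemma sum_Ncount_mul {m : ℕ} (hq : 0 < q) (hm : 0 < m) (hqm : q ^ m ≡ 1 [MOD n * r])
    (hr : 0 < r) (hqr : q ≡ 1 [MOD r]) :
    ∑ k ∈ (Zset n r).image (fun i => #(cosetOf q (n * r) i)), Ncount q n r k * k = n := by
  conv_rhs => rw [← sum_card_cosetsIn hq hm hqm hr hqr]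
  refine Eq.trans ?_ (sum_comp (s := cosetsIn q n r) (f := id) (g := Finset.card)).symm
  rw [cosetsIn, image_image]
  rfl

end Zset

lemma le_mul_card_of_forall_repIcc_mem {n r δ : ℕ} {S : Finset ℕ} (hr : 0 < r) (hδ : 0 < δ)
    (hS : ∀ k, repIcc (n * r) (δ * (1 + k * r)) ∈ S) : n ≤ δ * #S := by
  rcases Nat.eq_zero_or_pos n with rfl | hn
  · exact Nat.zero_le _
  have hinj : #(range (n / n.gcd δ)) ≤ #S := by
    refine card_le_card_of_injOn (fun k => repIcc (n * r) (δ * (1 + k * r))) (fun k _ => hS k) ?_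
    intro k₁ hk₁ k₂ hk₂ h
    simp only [coe_range, Set.mem_Iio] at hk₁ hk₂
    have hpos (k : ℕ) : 1 ≤ δ * (1 + k * r) := Nat.mul_le_mul hδ (Nat.le_add_right 1 _)
    have h₁ := (repIcc_eq_repIcc_iff (hpos k₁) (hpos k₂)).mp h
    simp only [mul_add, mul_one, ← mul_assoc] at h₁
    have h₂ : δ * k₁ ≡ δ * k₂ [MOD n] := Nat.ModEq.mul_right_cancel' hr.ne' (h₁.add_left_cancel' δ)
    exact (h₂.cancel_left_div_gcd hn).eq_of_lt_of_lt hk₁ hk₂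
  calc n = n.gcd δ * (n / n.gcd δ) := (Nat.mul_div_cancel' (Nat.gcd_dvd_left n δ)).symm
    _ ≤ δ * #S := Nat.mul_le_mul (Nat.le_of_dvd hδ (Nat.gcd_dvd_right n δ)) (by simpa using hinj)

lemma delta_one_eq_leader {q n r l : ℕ} {C : Finset ℕ}
    (hC : (cosetsIn q n r).filter (fun C => #C = l) = {C}) : delta q n r l 1 = leader C := by
  simp only [delta, leaderList, hC, image_singleton, sort_singleton]
  rfl

lemma le_leader_mul {q n r m l : ℕ} {C : Finset ℕ} (hq : 0 < q) (hm : 0 < m)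
    (hqm : q ^ m ≡ 1 [MOD n * r]) (hr : 0 < r) (hqr : q ≡ 1 [MOD r])
    (hC : (cosetsIn q n r).filter (fun C => #C = l) = {C})
    (hper : ∀ x ∈ Zset n r, x * q ^ l ≡ x [MOD n * r] → #(cosetOf q (n * r) x) = l) :
    n ≤ leader C * l := by
  obtain ⟨hCmem, hCcard⟩ := mem_filter.mp (hC ▸ mem_singleton_self C)
  obtain ⟨i, hi, rfl⟩ := mem_image.mp hCmem
  have hiIcc := ((mem_Zset_iff hr).mp hi).1
  have hN : 0 < n * r := by have := mem_Icc.mp hiIcc; omega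
  set δ := leader (cosetOf q (n * r) i)
  have hδC : δ ∈ cosetOf q (n * r) i := Nat.sInf_mem ⟨i, self_mem_cosetOf hiIcc⟩
  obtain ⟨hδIcc, hδr⟩ := (mem_Zset_iff hr).mp (cosetOf_subset_Zset hr hqr hi hδC)
  have hδl : δ * q ^ l ≡ δ [MOD n * r] :=
    hCcard ▸ mul_pow_card_cosetOf_modEq hq hiIcc (mem_periodicPts_cosetStep hq hm hqm hiIcc) hδC
  -- Each `δ (1 + k r)` lies in `Z_{n,r}` and is fixed by `q ^ l`, so its coset is `C`.
  rw [← hCcard]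
  refine le_mul_card_of_forall_repIcc_mem hr (mem_Icc.mp hδIcc).1 fun k => ?_
  set x := repIcc (n * r) (δ * (1 + k * r))
  have hx : x ≡ δ * (1 + k * r) [MOD n * r] :=
    repIcc_modEq (Nat.mul_le_mul (mem_Icc.mp hδIcc).1 (Nat.le_add_right 1 _))
  have hxZ : x ∈ Zset n r := by
    refine (mem_Zset_iff hr).mpr ⟨repIcc_mem_Icc hN _, (hx.of_mul_left n).trans ?_⟩
    simpa using hδr.mul (Nat.add_mul_mod_self_right 1 k r : 1 + k * r ≡ 1 [MOD r])
  have hxl : x * q ^ l ≡ x [MOD n * r] :=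
    calc x * q ^ l ≡ δ * (1 + k * r) * q ^ l [MOD n * r] := hx.mul_right _
      _ = δ * q ^ l * (1 + k * r) := by ring
      _ ≡ δ * (1 + k * r) [MOD n * r] := hδl.mul_right _
      _ ≡ x [MOD n * r] := hx.symm
  have hxC : cosetOf q (n * r) x ∈ ({cosetOf q (n * r) i} : Finset _) :=
    hC ▸ mem_filter.mpr ⟨mem_image_of_mem _ hxZ, hper x hxZ hxl⟩
  exact mem_singleton.mp hxC ▸ self_mem_cosetOf (repIcc_mem_Icc hN _)

theorem stmt6_general (q n r m s l : ℕ) (hn : 0 < n)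
    (hr : 0 < r) (hrdvd : r ∣ q - 1) (hm : 0 < m) (hs : 0 < s)
    (hnrs : n * r * s = q ^ m - 1)
    (hl : 0 < l) (hlm : l < m)
    (hset : (Zset n r).image (fun i => (cosetOf q (n * r) i).card) = {l, m})
    (hNl : Ncount q n r l = 1) (hcond : q * l * r ≤ 2 * m * (q - 1)) :
    q * Ncount q n r m * r < 2 * (q - 1) * delta q n r l 1 := by
  have hqm1 : 1 < q ^ m := by have := Nat.mul_pos (Nat.mul_pos hn hr) hs; omega
  have hq : 1 < q := (Nat.one_lt_pow_iff hm.ne').mp hqm1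
  have hqm : q ^ m ≡ 1 [MOD n * r] := ((Nat.modEq_iff_dvd' hqm1.le).mpr ⟨s, hnrs.symm⟩).symm
  have hqr : q ≡ 1 [MOD r] := ((Nat.modEq_iff_dvd' hq.le).mpr hrdvd).symm
  have hcount : l + Ncount q n r m * m = n := by
    simpa [hset, sum_pair hlm.ne, hNl] using sum_Ncount_mul (by omega) hm hqm hr hqr
  obtain ⟨C, hC⟩ := card_eq_one.mp hNl
  have hleader : n ≤ delta q n r l 1 * l := by
    rw [delta_one_eq_leader hC]
    refine le_leader_mul (by omega) hm hqm hr hqr hC fun x hx hxl => ?_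
    have hdvd := card_cosetOf_dvd (by omega) ((mem_Zset_iff hr).mp hx).1 hl hxl
    have hmem : #(cosetOf q (n * r) x) ∈ ({l, m} : Finset ℕ) := hset ▸ mem_image_of_mem _ hx
    rcases mem_insert.mp hmem with h | h
    · exact h
    · exact absurd (Nat.le_of_dvd hl (mem_singleton.mp h ▸ hdvd)) hlm.not_ge
  refine Nat.lt_of_mul_lt_mul_right (a := l * m) ?_
  calc q * Ncount q n r m * r * (l * m) = q * l * r * (Ncount q n r m * m) := by ring
    _ < q * l * r * n := Nat.mul_lt_mul_of_pos_left (by omega) (by positivity)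
    _ ≤ 2 * m * (q - 1) * (delta q n r l 1 * l) := Nat.mul_le_mul hcond hleader
    _ = 2 * (q - 1) * delta q n r l 1 * (l * m) := by ring

theorem stmt6 (q n r m s l : ℕ) (hq : IsPrimePow q) (hn : 0 < n) (hco : Nat.Coprime n q)
    (hr : 0 < r) (hrdvd : r ∣ q - 1) (hm : 0 < m) (hs : 0 < s)
    (hnrs : n * r * s = q ^ m - 1)
    (hl : 0 < l) (hlm : l < m) (hldvd : l ∣ m)
    (hset : (Zset n r).image (fun i => (cosetOf q (n * r) i).card) = {l, m})
    (hNl : Ncount q n r l = 1) (hcond : q * l * r ≤ 2 * m * (q - 1)) :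
    q * Ncount q n r m * r < 2 * (q - 1) * delta q n r l 1 :=
  stmt6_general q n r m s l hn hr hrdvd hm hs hnrs hl hlm hset hNl hcond
end
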